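/- Let 0 < β ≤ 1 and let a be a function supported in B(0,R) such that A_β(a)(y,t) ≤ K R^{n+β}/t^{n+β} for all (y,t) ∈ ℝ^{n+1}_+. If |x| ≥ 2R and j ∈ ℕ, then S_{β,2^j}(a)(x) ≤ C 2^{j(3n+2β)/2} K R^{n+β} |x|^{−(n+β)}, with C depending only on n and β. -/

import Mathlib

/-!
For `(y, t)` in the cone `|x - y| < 2^j t` with `t < |x| / 2^(j+2)`, the ball `B(y, t)` misses
`B(0, R) ⊇ supp a` because `|x| ≥ 2R`, so every `a * φ_t (y)` vanishes and `A_β(a)(y, t) = 0`.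
On the rest of the cone the decay hypothesis bounds the integrand of `S_{β,2^j}(a)(x)²` by
`K² R^{2(n+β)} t^{-(3n+1+2β)}`. Integrating over the slice `B(x, 2^j t)`, of volume
`|B(0,1)| (2^j t)^n`, and then over `t ≥ |x| / 2^(j+2)` gives
`|B(0,1)| 2^{jn} (2^{j+2} / |x|)^{2(n+β)} / (2(n+β))` times `K² R^{2(n+β)}`,
the square of the claimed bound.
-/

open MeasureTheory Metric Set

noncomputable section

/-- `ℝⁿ` as a Euclidean space. -/
abbrev Rn (n : ℕ) : Type := EuclideanSpace ℝ (Fin n)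

variable {n : ℕ}

/-- Weighted measure of a set: `w(E) = ∫_E w`. -/
def wMeas (w : Rn n → ℝ) (s : Set (Rn n)) : ℝ := ∫ x in s, w x

/-- The Muckenhoupt `A₁` condition with constant `C`. -/
def IsA1 (w : Rn n → ℝ) (C : ℝ) : Prop :=
  (∀ x, 0 ≤ w x) ∧ MeasureTheory.LocallyIntegrable w ∧
    ∀ (x₀ : Rn n) (R : ℝ), 0 < R →
      (∫ x in ball x₀ R, w x) ≤
        C * (volume (ball x₀ R)).toReal * essInf w (volume.restrict (ball x₀ R))

/-- The Muckenhoupt `A_p` condition (`1 < p`) with constant `C`. -/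
def IsAp (w : Rn n → ℝ) (p C : ℝ) : Prop :=
  (∀ x, 0 ≤ w x) ∧ MeasureTheory.LocallyIntegrable w ∧
    ∀ (x₀ : Rn n) (R : ℝ), 0 < R →
      ((volume (ball x₀ R)).toReal⁻¹ * ∫ x in ball x₀ R, w x) *
        ((volume (ball x₀ R)).toReal⁻¹ * ∫ x in ball x₀ R, (w x) ^ (-(1 / (p - 1)))) ^ (p - 1)
        ≤ C

/-- The reverse Hölder condition `RH_r` with constant `C`. -/
def IsRH (w : Rn n → ℝ) (r C : ℝ) : Prop :=
  ∀ (x₀ : Rn n) (R : ℝ), 0 < R →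
    ((volume (ball x₀ R)).toReal⁻¹ * ∫ x in ball x₀ R, (w x) ^ r) ^ (1 / r) ≤
      C * ((volume (ball x₀ R)).toReal⁻¹ * ∫ x in ball x₀ R, w x)

/-- The class `C_β`: support in the closed unit ball, mean zero, β-Hölder with constant 1. -/
def MemCbeta (β : ℝ) (φ : Rn n → ℝ) : Prop :=
  (∀ x, φ x ≠ 0 → ‖x‖ ≤ 1) ∧ MeasureTheory.Integrable φ ∧ (∫ x, φ x) = 0 ∧
    ∀ x x' : Rn n, |φ x - φ x'| ≤ ‖x - x'‖ ^ β

/-- Convolution `f * φ_t (x)` with the dilation `φ_t(x) = t^{-n} φ(x/t)`. -/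
def convPhi (f φ : Rn n → ℝ) (t : ℝ) (x : Rn n) : ℝ :=
  ∫ y, f y * (t ^ (-(n : ℝ)) * φ (t⁻¹ • (x - y)))

/-- The intrinsic averaging function `A_β(f)(y,t) = sup_{φ ∈ C_β} |f * φ_t(y)|`. -/
def Abeta (β : ℝ) (f : Rn n → ℝ) (y : Rn n) (t : ℝ) : ℝ :=
  ⨆ φ : {φ : Rn n → ℝ // MemCbeta β φ}, |convPhi f φ.1 t y|

/-- The intrinsic Littlewood–Paley `g`-function. -/
def gbeta (β : ℝ) (f : Rn n → ℝ) (x : Rn n) : ℝ :=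
  (∫ t in Ioi (0 : ℝ), (Abeta β f x t) ^ 2 / t) ^ (1 / 2 : ℝ)

/-- The intrinsic Lusin area function of aperture `γ`. -/
def SbetaA (β γ : ℝ) (f : Rn n → ℝ) (x : Rn n) : ℝ :=
  (∫ p in {p : Rn n × ℝ | dist x p.1 < γ * p.2 ∧ 0 < p.2},
      (Abeta β f p.1 p.2) ^ 2 / p.2 ^ (n + 1)) ^ (1 / 2 : ℝ)

/-- The intrinsic `g^*_λ` function. -/
def gstar (lam β : ℝ) (f : Rn n → ℝ) (x : Rn n) : ℝ :=
  (∫ p in {p : Rn n × ℝ | 0 < p.2},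
      (p.2 / (p.2 + dist x p.1)) ^ (lam * (n : ℝ)) * (Abeta β f p.1 p.2) ^ 2 / p.2 ^ (n + 1)) ^
    (1 / 2 : ℝ)

/-- The weighted `L^q` norm `(∫ |g|^q w)^{1/q}`. -/
def wLq (q : ℝ) (w g : Rn n → ℝ) : ℝ := (∫ x, |g x| ^ q * w x) ^ (1 / q)

/-- The weighted Hardy–Littlewood maximal operator. -/
def Mw (w b : Rn n → ℝ) (x : Rn n) : ℝ :=
  ⨆ B : {B : Rn n × ℝ // 0 < B.2 ∧ x ∈ ball B.1 B.2},
    (wMeas w (ball B.1.1 B.1.2))⁻¹ * ∫ y in ball B.1.1 B.1.2, |b y| * w y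

/-- A central `(α, q, 0; w₁, w₂)`-atom supported in `B(0,R)`. -/
def IsCentralAtom (α q R : ℝ) (w₁ w₂ a : Rn n → ℝ) : Prop :=
  MeasureTheory.Integrable a ∧ (∀ x, a x ≠ 0 → x ∈ ball (0 : Rn n) R) ∧
    wLq q w₂ a ≤ (wMeas w₁ (ball (0 : Rn n) R)) ^ (-(α / (n : ℝ))) ∧
    (∫ x, a x) = 0

/-- The homogeneous weighted Herz norm `‖f‖_{\dot K^{α,p}_q(w₁,w₂)}`. -/
def herzNorm (α p q : ℝ) (w₁ w₂ f : Rn n → ℝ) : ℝ :=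
  (∑' k : ℤ,
      (wMeas w₁ (closedBall (0 : Rn n) ((2 : ℝ) ^ k))) ^ (α * p / (n : ℝ)) *
        ((∫ x in closedBall (0 : Rn n) ((2 : ℝ) ^ k) \ closedBall (0 : Rn n) ((2 : ℝ) ^ (k - 1)),
            |f x| ^ q * w₂ x) ^ (1 / q)) ^ p) ^ (1 / p)

open Module

section TruncatedCone

variable {E : Type*} [NormedAddCommGroup E]

def truncCone (x : E) (γ t₀ : ℝ) : Set (E × ℝ) := {p | dist x p.1 < γ * p.2 ∧ t₀ ≤ p.2}

lemma truncCone_indicator_slice (x : E) (γ t₀ : ℝ) (φ : ℝ → ℝ) (τ : ℝ) :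
    (fun y => (truncCone x γ t₀).indicator (fun p => φ p.2) (y, τ)) =
      (ball x (γ * τ)).indicator fun _ => (Ici t₀).indicator φ τ := by
  ext y
  simp only [truncCone, Set.indicator, mem_ofPred_eq, mem_ball', mem_Ici]
  by_cases hτ : t₀ ≤ τ <;> simp [hτ]

variable [MeasurableSpace E] [BorelSpace E]

lemma measurableSet_truncCone (x : E) (γ t₀ : ℝ) : MeasurableSet (truncCone x γ t₀) :=
  (isOpen_lt (continuous_const.dist continuous_fst)
    (continuous_const.mul continuous_snd)).measurableSet.inter
    (isClosed_le continuous_const continuous_snd).measurableSet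

variable [NormedSpace ℝ E] [FiniteDimensional ℝ E] (μ : Measure E) [μ.IsAddHaarMeasure]

lemma integral_truncCone_indicator_slice (x : E) {γ t₀ : ℝ} (hγ : 0 < γ) (ht₀ : 0 < t₀)
    (φ : ℝ → ℝ) (τ : ℝ) :
    ∫ y, (truncCone x γ t₀).indicator (fun p => φ p.2) (y, τ) ∂μ =
      μ.real (ball 0 1) * γ ^ finrank ℝ E *
        (Ici t₀).indicator (fun τ => τ ^ finrank ℝ E * φ τ) τ := by
  rw [truncCone_indicator_slice, integral_indicator_const _ measurableSet_ball, smul_eq_mul]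
  by_cases hτ : t₀ ≤ τ
  · have hr : 0 < γ * τ := mul_pos hγ (ht₀.trans_le hτ)
    rw [measureReal_def, Measure.addHaar_ball_of_pos μ x hr, ENNReal.toReal_mul,
      ENNReal.toReal_ofReal (by positivity), indicator_of_mem (mem_Ici.2 hτ),
      indicator_of_mem (mem_Ici.2 hτ), ← measureReal_def, mul_pow]
    ring
  · simp [hτ]

lemma integrable_truncCone_indicator (x : E) {γ t₀ : ℝ} (hγ : 0 < γ) (ht₀ : 0 < t₀)
    {φ : ℝ → ℝ} (hφm : Measurable φ)
    (hφ : IntegrableOn (fun τ => τ ^ finrank ℝ E * φ τ) (Ici t₀)) :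
    Integrable ((truncCone x γ t₀).indicator fun p => φ p.2) (μ.prod volume) := by
  have hm : Measurable ((truncCone x γ t₀).indicator fun p : E × ℝ => φ p.2) :=
    (hφm.comp measurable_snd).indicator (measurableSet_truncCone x γ t₀)
  refine (integrable_prod_iff' hm.aestronglyMeasurable).2 ⟨ae_of_all _ fun τ => ?_, ?_⟩
  · rw [truncCone_indicator_slice, integrable_indicator_iff measurableSet_ball]
    exact integrableOn_const measure_ball_lt_top.ne
  · simp_rw [norm_indicator_eq_indicator_norm,
      integral_truncCone_indicator_slice μ x hγ ht₀ (‖φ ·‖)]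
    refine ((IntegrableOn.congr_fun hφ.norm (fun τ hτ => ?_) measurableSet_Ici)
      |>.integrable_indicator measurableSet_Ici).const_mul _
    rw [norm_mul, norm_pow, Real.norm_of_nonneg (ht₀.le.trans hτ)]

lemma integral_truncCone_indicator (x : E) {γ t₀ : ℝ} (hγ : 0 < γ) (ht₀ : 0 < t₀)
    {φ : ℝ → ℝ} (hφm : Measurable φ)
    (hφ : IntegrableOn (fun τ => τ ^ finrank ℝ E * φ τ) (Ici t₀)) :
    ∫ p, (truncCone x γ t₀).indicator (fun p => φ p.2) p ∂(μ.prod volume) =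
      μ.real (ball 0 1) * γ ^ finrank ℝ E * ∫ τ in Ici t₀, τ ^ finrank ℝ E * φ τ := by
  rw [integral_prod_symm _ (integrable_truncCone_indicator μ x hγ ht₀ hφm hφ)]
  simp_rw [integral_truncCone_indicator_slice μ x hγ ht₀]
  rw [integral_const_mul, integral_indicator measurableSet_Ici]

end TruncatedCone

section PowerTail

variable {t₀ s : ℝ} (d : ℕ)

lemma pow_mul_rpow_eq_rpow {τ : ℝ} (hτ : 0 < τ) :
    τ ^ d * τ ^ (-(d + 1 + s)) = τ ^ (-s - 1) := by
  rw [← Real.rpow_natCast, ← Real.rpow_add hτ]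
  ring_nf

lemma integrableOn_Ici_pow_mul_rpow (ht₀ : 0 < t₀) (hs : 0 < s) :
    IntegrableOn (fun τ : ℝ => τ ^ d * τ ^ (-(d + 1 + s))) (Ici t₀) := by
  rw [integrableOn_Ici_iff_integrableOn_Ioi]
  exact (integrableOn_Ioi_rpow_of_lt (by linarith) ht₀).congr_fun
    (fun τ hτ => (pow_mul_rpow_eq_rpow d (ht₀.trans hτ)).symm) measurableSet_Ioi

lemma integral_Ici_pow_mul_rpow (ht₀ : 0 < t₀) (hs : 0 < s) :
    ∫ τ in Ici t₀, τ ^ d * τ ^ (-(d + 1 + s)) = t₀ ^ (-s) / s := by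
  rw [integral_Ici_eq_integral_Ioi,
    setIntegral_congr_fun measurableSet_Ioi fun τ hτ => pow_mul_rpow_eq_rpow d (ht₀.trans hτ),
    integral_Ioi_rpow_of_lt (by linarith) ht₀]
  ring_nf

end PowerTail

lemma lt_dist_of_far_from_ball {E : Type*} [SeminormedAddCommGroup E] {x y z : E}
    {R γ t : ℝ} (hγ : 1 ≤ γ) (hz : ‖z‖ < R) (hx : 2 * R ≤ ‖x‖) (hy : dist x y < γ * t)
    (ht : t < ‖x‖ / (4 * γ)) : t < dist y z := by
  have hxz : ‖x‖ - ‖z‖ ≤ dist x z := by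
    rw [dist_eq_norm]
    exact norm_sub_norm_le x z
  have hxyz := dist_triangle x y z
  have ht' : 4 * γ * t < ‖x‖ := by rwa [lt_div_iff₀' (by positivity)] at ht
  nlinarith [dist_nonneg (x := y) (y := z)]

lemma abeta_nonneg (β : ℝ) (a : Rn n → ℝ) (y : Rn n) (t : ℝ) : 0 ≤ Abeta β a y t :=
  Real.iSup_nonneg fun _ => abs_nonneg _

lemma convPhi_eq_zero_of_forall_lt_dist {β t : ℝ} {a φ : Rn n → ℝ} {y : Rn n}
    (hφ : MemCbeta β φ) (ht : 0 < t) (h : ∀ z, a z ≠ 0 → t < dist y z) :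
    convPhi a φ t y = 0 := by
  refine integral_eq_zero_of_ae (ae_of_all _ fun z => ?_)
  by_cases hz : a z = 0
  · simp [hz]
  · have hφz : φ (t⁻¹ • (y - z)) = 0 := by
      by_contra hne
      have h1 := hφ.1 _ hne
      rw [norm_smul, norm_inv, Real.norm_of_nonneg ht.le, inv_mul_le_iff₀ ht, mul_one,
        ← dist_eq_norm] at h1
      exact (h z hz).not_ge h1
    simp [hφz]

lemma abeta_eq_zero_of_forall_lt_dist {β t : ℝ} {a : Rn n → ℝ} {y : Rn n} (ht : 0 < t)
    (h : ∀ z, a z ≠ 0 → t < dist y z) : Abeta β a y t = 0 := by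
  have hφ (φ : {φ : Rn n → ℝ // MemCbeta β φ}) : |convPhi a φ.1 t y| = 0 := by
    rw [convPhi_eq_zero_of_forall_lt_dist φ.2 ht h, abs_zero]
  simp only [Abeta, hφ, Real.iSup_const_zero]

section AreaFunction

variable {β γ s t₀ M : ℝ} {a : Rn n → ℝ} {x : Rn n}

lemma sq_abeta_div_pow_le_indicator
    (hdecay : ∀ y t, 0 < t → Abeta β a y t ≤ M / t ^ s)
    (hvanish : ∀ y t, 0 < t → t < t₀ → dist x y < γ * t → Abeta β a y t = 0)
    {y : Rn n} {t : ℝ} (hyt : dist x y < γ * t) (ht : 0 < t) :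
    Abeta β a y t ^ 2 / t ^ (n + 1) ≤
      M ^ 2 * (truncCone x γ t₀).indicator (fun p => p.2 ^ (-(n + 1 + 2 * s))) (y, t) := by
  by_cases htt : t₀ ≤ t
  · rw [indicator_of_mem (show (y, t) ∈ truncCone x γ t₀ from ⟨hyt, htt⟩)]
    calc Abeta β a y t ^ 2 / t ^ (n + 1) ≤ (M / t ^ s) ^ 2 / t ^ (n + 1) := by
          gcongr
          exacts [abeta_nonneg β a y t, hdecay y t ht]
      _ = M ^ 2 * t ^ (-(n + 1 + 2 * s)) := by
          rw [div_pow, div_div, ← Real.rpow_natCast (t ^ s), ← Real.rpow_mul ht.le,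
            ← Real.rpow_natCast t (n + 1), ← Real.rpow_add ht, div_eq_mul_inv,
            ← Real.rpow_neg ht.le]
          push_cast
          ring_nf
  · rw [hvanish y t ht (not_le.1 htt) hyt,
      indicator_of_notMem (show (y, t) ∉ truncCone x γ t₀ from fun h => htt h.2)]
    simp

lemma sbetaA_le_of_decay (hγ : 0 < γ) (ht₀ : 0 < t₀) (hs : 0 < s)
    (hdecay : ∀ y t, 0 < t → Abeta β a y t ≤ M / t ^ s)
    (hvanish : ∀ y t, 0 < t → t < t₀ → dist x y < γ * t → Abeta β a y t = 0) :
    SbetaA β γ a x ≤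
      M * √(volume.real (ball (0 : Rn n) 1) * γ ^ n * (t₀ ^ (-(2 * s)) / (2 * s))) := by
  have hM : 0 ≤ M := by simpa using (abeta_nonneg β a 0 1).trans (hdecay 0 1 one_pos)
  have htail :
      IntegrableOn (fun τ : ℝ => τ ^ finrank ℝ (Rn n) * τ ^ (-(n + 1 + 2 * s))) (Ici t₀) := by
    rw [finrank_euclideanSpace_fin]
    exact integrableOn_Ici_pow_mul_rpow n ht₀ (by positivity)
  have hg := (integrable_truncCone_indicator volume x hγ ht₀ (by fun_prop) htail).const_mul (M ^ 2)
  rw [← Measure.volume_eq_prod] at hg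
  have hg0 (p : Rn n × ℝ) :
      0 ≤ M ^ 2 * (truncCone x γ t₀).indicator (fun p => p.2 ^ (-(n + 1 + 2 * s))) p :=
    mul_nonneg (sq_nonneg M)
      (indicator_nonneg (fun p hp => Real.rpow_nonneg (ht₀.le.trans hp.2) _) p)
  have hΓ : MeasurableSet {p : Rn n × ℝ | dist x p.1 < γ * p.2 ∧ 0 < p.2} :=
    ((isOpen_lt (continuous_const.dist continuous_fst) (continuous_const.mul continuous_snd)).inter
      (isOpen_lt continuous_const continuous_snd)).measurableSet
  have hle : ∫ p in {p : Rn n × ℝ | dist x p.1 < γ * p.2 ∧ 0 < p.2},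
      Abeta β a p.1 p.2 ^ 2 / p.2 ^ (n + 1) ≤
      ∫ p, M ^ 2 * (truncCone x γ t₀).indicator (fun p => p.2 ^ (-(n + 1 + 2 * s))) p := by
    refine (integral_mono_of_nonneg ((ae_restrict_iff' hΓ).2 (ae_of_all _ fun p hp => ?_))
      hg.integrableOn ((ae_restrict_iff' hΓ).2 (ae_of_all _ fun p hp => ?_))).trans
      (setIntegral_le_integral hg (ae_of_all _ hg0))
    · exact div_nonneg (sq_nonneg _) (pow_nonneg hp.2.le _)
    · exact sq_abeta_div_pow_le_indicator hdecay hvanish hp.1 hp.2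
  have hval : ∫ p, M ^ 2 * (truncCone x γ t₀).indicator (fun p => p.2 ^ (-(n + 1 + 2 * s))) p =
      M ^ 2 * (volume.real (ball (0 : Rn n) 1) * γ ^ n * (t₀ ^ (-(2 * s)) / (2 * s))) := by
    rw [integral_const_mul, Measure.volume_eq_prod,
      integral_truncCone_indicator volume x hγ ht₀ (by fun_prop) htail,
      finrank_euclideanSpace_fin, integral_Ici_pow_mul_rpow n ht₀ (by positivity)]
  rw [SbetaA, ← Real.sqrt_eq_rpow, ← Real.sqrt_sq hM, ← Real.sqrt_mul (sq_nonneg M)]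
  exact Real.sqrt_le_sqrt (hle.trans hval.le)

end AreaFunction

lemma two_pow_pow_mul_div_rpow (n j : ℕ) (β : ℝ) {X : ℝ} (hX : 0 < X) :
    ((2 : ℝ) ^ j) ^ n * (X / (4 * 2 ^ j)) ^ (-(2 * (n + β))) =
      2 ^ (4 * (n + β)) * ((2 : ℝ) ^ ((j : ℝ) * (3 * n + 2 * β) / 2) * X ^ (-(n + β))) ^ 2 := by
  have h4 : (4 : ℝ) * 2 ^ j = 2 ^ ((j : ℝ) + 2) := by
    rw [Real.rpow_add two_pos, Real.rpow_natCast]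
    norm_num
    ring
  have hpow : ((2 : ℝ) ^ j) ^ n = 2 ^ ((j : ℝ) * n) := by
    rw [← pow_mul, ← Real.rpow_natCast]
    push_cast
    rfl
  rw [h4, hpow, Real.div_rpow hX.le (by positivity), mul_pow, ← Real.rpow_natCast _ 2,
    ← Real.rpow_natCast (X ^ _) 2, ← Real.rpow_mul two_pos.le, ← Real.rpow_mul two_pos.le,
    ← Real.rpow_mul hX.le, div_eq_mul_inv, ← Real.rpow_neg two_pos.le]
  have hX2 : X ^ (-(n + β) * ((2 : ℕ) : ℝ)) = X ^ (-(2 * (n + β))) := by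
    congr 1
    push_cast
    ring
  rw [hX2, mul_comm (X ^ _), ← mul_assoc, ← mul_assoc, ← Real.rpow_add two_pos,
    ← Real.rpow_add two_pos]
  congr 2
  push_cast
  ring

theorem stmt12_general (β : ℝ) (hβ : 0 < β) :
    ∃ C > 0, ∀ (K R : ℝ) (a : Rn n → ℝ), 0 < R → 0 ≤ K →
      (∀ x, a x ≠ 0 → x ∈ ball (0 : Rn n) R) →
      (∀ (y : Rn n) (t : ℝ), 0 < t → Abeta β a y t ≤ K * R ^ ((n : ℝ) + β) / t ^ ((n : ℝ) + β)) →
      ∀ (x : Rn n) (j : ℕ), 2 * R ≤ ‖x‖ →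
        SbetaA β ((2 : ℝ) ^ j) a x ≤
          C * (2 : ℝ) ^ ((j : ℝ) * (3 * (n : ℝ) + 2 * β) / 2) * K * R ^ ((n : ℝ) + β) *
            ‖x‖ ^ (-((n : ℝ) + β)) := by
  set V := volume.real (ball (0 : Rn n) 1) with hVdef
  have hV : 0 < V :=
    ENNReal.toReal_pos (measure_ball_pos volume 0 one_pos).ne' measure_ball_lt_top.ne
  refine ⟨√(V * 2 ^ (4 * (n + β)) / (2 * (n + β))), by positivity, ?_⟩
  intro K R a hR _ hsupp hA x j hx
  have hx0 : 0 < ‖x‖ := by linarith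
  have hvanish (y : Rn n) (t : ℝ) (ht : 0 < t) (htt : t < ‖x‖ / (4 * 2 ^ j))
      (hyt : dist x y < 2 ^ j * t) : Abeta β a y t = 0 :=
    abeta_eq_zero_of_forall_lt_dist ht fun z hz => lt_dist_of_far_from_ball
      (one_le_pow₀ one_le_two) (mem_ball_zero_iff.1 (hsupp z hz)) hx hyt htt
  have hscale : V * (2 ^ j) ^ n * ((‖x‖ / (4 * 2 ^ j)) ^ (-(2 * (n + β))) / (2 * (n + β))) =
      V * 2 ^ (4 * (n + β)) / (2 * (n + β)) *
        ((2 : ℝ) ^ ((j : ℝ) * (3 * n + 2 * β) / 2) * ‖x‖ ^ (-(n + β))) ^ 2 := by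
    linear_combination (V / (2 * (n + β))) * two_pow_pow_mul_div_rpow n j β hx0
  refine (sbetaA_le_of_decay (by positivity) (by positivity) (by positivity) hA hvanish).trans_eq ?_
  rw [← hVdef, hscale, Real.sqrt_mul (by positivity), Real.sqrt_sq (by positivity)]
  ring

/-- far-field decay of the varying-aperture square function:
`S_{β,2^j}(a)(x) ≤ C 2^{j(3n+2β)/2} K R^{n+β} |x|^{-(n+β)}` for `|x| ≥ 2R`. -/
theorem stmt12 (β : ℝ) (hβ : 0 < β) (hβ1 : β ≤ 1) :
    ∃ C > 0, ∀ (K R : ℝ) (a : Rn n → ℝ), 0 < R → 0 ≤ K →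
      (∀ x, a x ≠ 0 → x ∈ ball (0 : Rn n) R) →
      (∀ (y : Rn n) (t : ℝ), 0 < t → Abeta β a y t ≤ K * R ^ ((n : ℝ) + β) / t ^ ((n : ℝ) + β)) →
      ∀ (x : Rn n) (j : ℕ), 2 * R ≤ ‖x‖ →
        SbetaA β ((2 : ℝ) ^ j) a x ≤
          C * (2 : ℝ) ^ ((j : ℝ) * (3 * (n : ℝ) + 2 * β) / 2) * K * R ^ ((n : ℝ) + β) *
            ‖x‖ ^ (-((n : ℝ) + β)) :=
  stmt12_general β hβ
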